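/- arXiv:1012.5931 — 3 statements merged into one kernel-verified Lean document; each statement's English description precedes it below -/
import Mathlib

section
/- Let R₀ < R* be real numbers, 0 < a₀ ≤ a₁, and let a : [R₀,R*] × ℝ → ℝ be smooth with a₀ ≤ a(R,θ) ≤ a₁ for all (R,θ). Let w₊, w₋, h₊, h₋ : [R₀,R*] × ℝ → ℝ be smooth with w₊ ≥ 0, w₋ ≥ 0, h₊ ≥ 0, h₋ ≥ 0, satisfying ∂_R w₊ + ∂_θ(a w₊) ≤ h₊ and ∂_R w₋ − ∂_θ(a w₋) ≤ h₋ everywhere. Fix L > a₁ R*. Define N^I(R) := ∬_{−L+a₁R ≤ θ₊ ≤ θ₋ ≤ L−a₁R} w₊(R,θ₊) w₋(R,θ₋) dθ₊ dθ₋, N^II(R) := ∫_{−L+a₁R}^{L−a₁R} w₊(R,θ) w₋(R,θ) dθ, and N^III(R) := (∫_{−L+a₁R}^{L−a₁R} h₊(R,θ) dθ)(∫_{−L+a₁R}^{L−a₁R} w₋(R,θ) dθ) + (∫_{−L+a₁R}^{L−a₁R} h₋(R,θ) dθ)(∫_{−L+a₁R}^{L−a₁R} w₊(R,θ) dθ).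 Then for every R ∈ (R₀,R*), (d/dR) N^I(R) + 2 a₀ N^II(R) ≤ N^III(R). -/
/-!
With `U r = L - a₁ r`, `N^I(r)` integrates `w₊(r,x) w₋(r,y)` over the shrinking triangle
`-U ≤ x ≤ y ≤ U`. The Leibniz rule for moving limits gives its derivative as the integral of
`∂_R w₊ w₋ + w₊ ∂_R w₋` plus the boundary terms `-a₁ w₊(-U) ∫ w₋` and `-a₁ w₋(U) ∫ w₊`.
Insert the transport inequalities and integrate the flux terms `∂_θ(a w_±)` in the variable they
act on (by parts for `w₊`, directly for `w₋`): this produces the diagonal term `-2 ∫ a w₊ w₋`,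
which is at most `-2 a₀ N^II`, and boundary fluxes `a w_±` that are absorbed by the `a₁ w_±` terms
since `a ≤ a₁`. The source terms are at most `N^III` because every function involved is
nonnegative.
-/

open Real

/-- Partial derivative in the first variable. -/
noncomputable def pd1 (f : ℝ → ℝ → ℝ) (x y : ℝ) : ℝ := deriv (fun s => f s y) x

/-- Partial derivative in the second variable. -/
noncomputable def pd2 (f : ℝ → ℝ → ℝ) (x y : ℝ) : ℝ := deriv (fun s => f x s) y

open Function Set MeasureTheory intervalIntegral

section PartialDeriv

variable {f : ℝ → ℝ → ℝ}

theorem hasDerivAt_pd1 (hf : ContDiff ℝ 1 (uncurry f)) (r x : ℝ) :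
    HasDerivAt (f · x) (pd1 f r x) r :=
  ((hf.differentiable one_ne_zero).differentiableAt.comp r
    (differentiableAt_id.prodMk (differentiableAt_const x))).hasDerivAt

theorem pd1_eq_fderiv (hf : ContDiff ℝ 1 (uncurry f)) (r x : ℝ) :
    pd1 f r x = fderiv ℝ (uncurry f) (r, x) (1, 0) := by
  have h := (hf.differentiable one_ne_zero (r, x)).hasFDerivAt.comp_hasDerivAt r
    ((hasDerivAt_id r).prodMk (hasDerivAt_const r x))
  exact (hasDerivAt_pd1 hf r x).unique h

theorem continuous_pd1 (hf : ContDiff ℝ 1 (uncurry f)) : Continuous (uncurry (pd1 f)) := by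
  have e : uncurry (pd1 f) = fun q => fderiv ℝ (uncurry f) q (1, 0) :=
    funext fun q => pd1_eq_fderiv hf q.1 q.2
  rw [e]
  exact (hf.continuous_fderiv one_ne_zero).clm_apply continuous_const

end PartialDeriv

section Tail

variable {β : ℝ} {g : ℝ → ℝ}

theorem hasDerivAt_integral_tail (hg : Continuous g) (x : ℝ) :
    HasDerivAt (fun x => ∫ y in x..β, g y) (-g x) x :=
  integral_hasDerivAt_left (hg.intervalIntegrable _ _) (hg.stronglyMeasurableAtFilter _ _)
    hg.continuousAt

theorem continuous_integral_tail (hg : Continuous g) : Continuous fun x => ∫ y in x..β, g y :=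
  continuous_iff_continuousAt.2 fun x => (hasDerivAt_integral_tail hg x).continuousAt

end Tail

theorem continuous_intervalIntegral_of_continuous_limits {X : Type*} [TopologicalSpace X]
    {f : X → ℝ → ℝ} (hf : Continuous (uncurry f)) {s t : X → ℝ} (hs : Continuous s)
    (ht : Continuous t) : Continuous fun x => ∫ y in s x..t x, f x y := by
  have hi : ∀ x u v, IntervalIntegrable (f x) volume u v := fun x _ _ =>
    (hf.uncurry_left x).intervalIntegrable _ _
  have e : (fun x => ∫ y in s x..t x, f x y)
      = fun x => (∫ y in 0..t x, f x y) - ∫ y in 0..s x, f x y :=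
    funext fun x => (integral_interval_sub_left (hi _ 0 _) (hi _ 0 _)).symm
  rw [e]
  fun_prop

section Leibniz

variable {f f₁ : ℝ → ℝ → ℝ}

theorem hasDerivAt_intervalIntegral_of_continuous (hf : Continuous (uncurry f))
    (hf₁ : Continuous (uncurry f₁)) (hd : ∀ r x, HasDerivAt (f · x) (f₁ r x) r) (a b r : ℝ) :
    HasDerivAt (fun r => ∫ x in a..b, f r x) (∫ x in a..b, f₁ r x) r := by
  obtain ⟨C, hC⟩ := ((isCompact_closedBall r 1).prod isCompact_uIcc).exists_bound_of_continuousOn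
    hf₁.continuousOn
  refine (hasDerivAt_integral_of_dominated_loc_of_deriv_le (bound := fun _ => C)
    (Metric.closedBall_mem_nhds r one_pos) (.of_forall fun r' => ?_) ?_ ?_ ?_
    intervalIntegrable_const (.of_forall fun x _ r' _ => hd r' x)).2
  · exact (hf.uncurry_left r').aestronglyMeasurable.restrict
  · exact (hf.uncurry_left r).intervalIntegrable a b
  · exact (hf₁.uncurry_left r).aestronglyMeasurable.restrict
  · exact .of_forall fun x hx r' hr' => hC (r', x) ⟨hr', uIoc_subset_uIcc hx⟩

theorem hasDerivAt_intervalIntegral_upper (hf : Continuous (uncurry f))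
    (hf₁ : Continuous (uncurry f₁)) (hd : ∀ r x, HasDerivAt (f · x) (f₁ r x) r) (c : ℝ)
    {β : ℝ → ℝ} {β' r : ℝ} (hβ : HasDerivAt β β' r) :
    HasDerivAt (fun r => ∫ x in c..β r, f r x) ((∫ x in c..β r, f₁ r x) + β' * f r (β r)) r := by
  set Φ : ℝ → ℝ → ℝ := fun r z => ∫ x in c..z, f r x
  have hΦ : HasFDerivAt (uncurry Φ)
      (((1 : ℝ →L[ℝ] ℝ).smulRight (∫ x in c..β r, f₁ r x)).coprod
        ((1 : ℝ →L[ℝ] ℝ).smulRight (f r (β r)))) (r, β r) := by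
    refine (hasStrictFDerivAt_uncurry_coprod (f := Φ) (u := (r, β r))
      (f₁ := fun r z => (1 : ℝ →L[ℝ] ℝ).smulRight (∫ x in c..z, f₁ r x))
      (f₂ := fun r z => (1 : ℝ →L[ℝ] ℝ).smulRight (f r z))
      (.of_forall fun v => ?_) (.of_forall fun v => ?_) ?_ ?_).hasFDerivAt
    · exact (hasDerivAt_intervalIntegral_of_continuous hf hf₁ hd c v.2 v.1).hasFDerivAt
    · exact ((hf.uncurry_left v.1).integral_hasStrictDerivAt c v.2).hasDerivAt.hasFDerivAt
    · exact ((ContinuousLinearMap.smulRightL ℝ ℝ ℝ 1).continuous.comp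
        (continuous_parametric_primitive_of_continuous hf₁)).continuousAt
    · exact ((ContinuousLinearMap.smulRightL ℝ ℝ ℝ 1).continuous.comp hf).continuousAt
  refine (hΦ.comp_hasDerivAt r ((hasDerivAt_id r).prodMk hβ)).congr_deriv ?_
  simp only [ContinuousLinearMap.coprod_apply, ContinuousLinearMap.smulRight_apply,
    one_apply_eq_self, smul_eq_mul, one_mul]

theorem hasDerivAt_intervalIntegral_limits (hf : Continuous (uncurry f))
    (hf₁ : Continuous (uncurry f₁)) (hd : ∀ r x, HasDerivAt (f · x) (f₁ r x) r)
    {α β : ℝ → ℝ} {α' β' r : ℝ} (hα : HasDerivAt α α' r) (hβ : HasDerivAt β β' r) :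
    HasDerivAt (fun r => ∫ x in α r..β r, f r x)
      ((∫ x in α r..β r, f₁ r x) + β' * f r (β r) - α' * f r (α r)) r := by
  have hi : ∀ g : ℝ → ℝ → ℝ, Continuous (uncurry g) → ∀ r u v,
      IntervalIntegrable (g r) volume u v := fun g hg r _ _ =>
    (hg.uncurry_left r).intervalIntegrable _ _
  have e : (fun r => ∫ x in α r..β r, f r x)
      = fun r => (∫ x in 0..β r, f r x) - ∫ x in 0..α r, f r x :=
    funext fun r => (integral_interval_sub_left (hi f hf _ 0 _) (hi f hf _ 0 _)).symm
  rw [e, ← integral_interval_sub_left (hi f₁ hf₁ r 0 _) (hi f₁ hf₁ r 0 _)]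
  exact ((hasDerivAt_intervalIntegral_upper hf hf₁ hd 0 hβ).sub
    (hasDerivAt_intervalIntegral_upper hf hf₁ hd 0 hα)).congr_deriv (by ring)

end Leibniz

section Triangle

variable {p m p₁ m₁ : ℝ → ℝ → ℝ} {α β β' : ℝ → ℝ}

theorem hasDerivAt_integral_triangle (hp : Continuous (uncurry p)) (hm : Continuous (uncurry m))
    (hp₁ : Continuous (uncurry p₁)) (hm₁ : Continuous (uncurry m₁))
    (hdp : ∀ r x, HasDerivAt (p · x) (p₁ r x) r) (hdm : ∀ r x, HasDerivAt (m · x) (m₁ r x) r)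
    (hβ : ∀ r, HasDerivAt β (β' r) r) (hβ' : Continuous β') {α' r : ℝ} (hα : HasDerivAt α α' r) :
    HasDerivAt (fun r => ∫ x in α r..β r, ∫ y in x..β r, p r x * m r y)
      ((∫ x in α r..β r, (p₁ r x * (∫ y in x..β r, m r y) + p r x * ∫ y in x..β r, m₁ r y))
        + β' r * m r (β r) * (∫ x in α r..β r, p r x)
        - α' * p r (α r) * ∫ y in α r..β r, m r y) r := by
  have hβc : Continuous β := continuous_iff_continuousAt.2 fun r => (hβ r).continuousAt
  set M : ℝ → ℝ → ℝ := fun r x => ∫ y in x..β r, m r y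
  set M₁ : ℝ → ℝ → ℝ := fun r x => (∫ y in x..β r, m₁ r y) + β' r * m r (β r)
  have hM : Continuous (uncurry M) :=
    continuous_intervalIntegral_of_continuous_limits (f := fun (q : ℝ × ℝ) y => m q.1 y)
      (hm.comp (continuous_fst.fst.prodMk continuous_snd)) continuous_snd
      (hβc.comp continuous_fst)
  have hM₁ : Continuous (uncurry M₁) := by
    refine (continuous_intervalIntegral_of_continuous_limits (f := fun (q : ℝ × ℝ) y => m₁ q.1 y)
      (hm₁.comp (continuous_fst.fst.prodMk continuous_snd)) continuous_snd
      (hβc.comp continuous_fst)).add ?_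
    exact (hβ'.comp continuous_fst).mul (hm.comp (continuous_fst.prodMk (hβc.comp continuous_fst)))
  have hdM : ∀ r x, HasDerivAt (M · x) (M₁ r x) r := fun r x => by
    simpa only [zero_mul, sub_zero, M, M₁] using
      hasDerivAt_intervalIntegral_limits hm hm₁ hdm (hasDerivAt_const r x) (hβ r)
  have e : (fun r => ∫ x in α r..β r, ∫ y in x..β r, p r x * m r y)
      = fun r => ∫ x in α r..β r, p r x * M r x := by
    simp only [M, intervalIntegral.integral_const_mul]
  rw [e]
  refine (hasDerivAt_intervalIntegral_limits (f := fun r x => p r x * M r x)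
    (f₁ := fun r x => p₁ r x * M r x + p r x * M₁ r x) (hp.mul hM) ((hp₁.mul hM).add (hp.mul hM₁))
    (fun r x => (hdp r x).mul (hdM r x)) hα (hβ r)).congr_deriv ?_
  have hsplit : ∀ x, p₁ r x * M r x + p r x * M₁ r x
      = (p₁ r x * M r x + p r x * ∫ y in x..β r, m₁ r y) + β' r * m r (β r) * p r x :=
    fun x => by ring
  have hA : Continuous fun x => p₁ r x * M r x + p r x * ∫ y in x..β r, m₁ r y :=
    ((hp₁.uncurry_left r).mul (hM.uncurry_left r)).add
      ((hp.uncurry_left r).mul (continuous_integral_tail (hm₁.uncurry_left r)))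
  simp only [hsplit]
  rw [integral_add (hA.intervalIntegrable _ _)
    (((hp.uncurry_left r).const_mul _).intervalIntegrable _ _), intervalIntegral.integral_const_mul]
  simp only [M, integral_same]
  ring

end Triangle

section Slice

variable {α β : ℝ}

theorem integral_mul_integral_tail_le {f g : ℝ → ℝ} (hαβ : α ≤ β) (hf : Continuous f)
    (hg : Continuous g) (hf₀ : ∀ x, 0 ≤ f x) (hg₀ : ∀ x, 0 ≤ g x) :
    ∫ x in α..β, f x * ∫ y in x..β, g y ≤ (∫ x in α..β, f x) * ∫ y in α..β, g y := by
  rw [← intervalIntegral.integral_mul_const]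
  refine integral_mono_on hαβ ((hf.mul (continuous_integral_tail hg)).intervalIntegrable _ _)
    ((hf.mul continuous_const).intervalIntegrable _ _)
    fun x hx => mul_le_mul_of_nonneg_left ?_ (hf₀ x)
  exact integral_mono_interval hx.1 hx.2 le_rfl (.of_forall hg₀) (hg.intervalIntegrable _ _)

theorem integral_deriv_mul_tail {F g : ℝ → ℝ} (hF : ContDiff ℝ 1 F) (hg : Continuous g) :
    ∫ x in α..β, deriv F x * ∫ y in x..β, g y
      = (∫ x in α..β, F x * g x) - F α * ∫ y in α..β, g y := by
  have hF' := hF.continuous_deriv le_rfl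
  have ibp := integral_mul_deriv_eq_deriv_mul (a := α) (b := β)
    (fun x _ => hasDerivAt_integral_tail (β := β) hg x)
    (fun x _ => (hF.differentiable one_ne_zero x).hasDerivAt) (hg.neg.intervalIntegrable _ _)
    (hF'.intervalIntegrable _ _)
  simp only [integral_same, zero_mul, zero_sub, neg_mul, intervalIntegral.integral_neg] at ibp
  rw [show (fun x => deriv F x * ∫ y in x..β, g y) = fun x => (∫ y in x..β, g y) * deriv F x from
    funext fun x => mul_comm _ _, ibp]
  simp_rw [mul_comm (g _)]
  ring

theorem integral_mul_tail_le_of_forward_transport {F p₁ h g : ℝ → ℝ} (hαβ : α ≤ β)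
    (hF : ContDiff ℝ 1 F) (hp₁ : Continuous p₁) (hh : Continuous h) (hg : Continuous g)
    (hg₀ : ∀ x, 0 ≤ g x) (ht : ∀ x, p₁ x + deriv F x ≤ h x) :
    ∫ x in α..β, p₁ x * ∫ y in x..β, g y
      ≤ (∫ x in α..β, h x * ∫ y in x..β, g y) - (∫ x in α..β, F x * g x)
        + F α * ∫ y in α..β, g y := by
  have hG := continuous_integral_tail (β := β) hg
  have hF' := hF.continuous_deriv le_rfl
  calc ∫ x in α..β, p₁ x * ∫ y in x..β, g y
      ≤ ∫ x in α..β, (h x - deriv F x) * ∫ y in x..β, g y := by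
        refine integral_mono_on hαβ ((hp₁.mul hG).intervalIntegrable _ _)
          (((hh.sub hF').mul hG).intervalIntegrable _ _) fun x hx => ?_
        exact mul_le_mul_of_nonneg_right (by linarith [ht x])
          (integral_nonneg hx.2 fun y _ => hg₀ y)
    _ = (∫ x in α..β, h x * ∫ y in x..β, g y) - ∫ x in α..β, deriv F x * ∫ y in x..β, g y := by
        simp_rw [sub_mul]
        exact integral_sub ((hh.mul hG).intervalIntegrable _ _)
          ((hF'.mul hG).intervalIntegrable _ _)
    _ = _ := by rw [integral_deriv_mul_tail hF hg]; ring

theorem integral_mul_tail_le_of_backward_transport {G m₁ h p : ℝ → ℝ} (hαβ : α ≤ β)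
    (hG : ContDiff ℝ 1 G) (hm₁ : Continuous m₁) (hh : Continuous h) (hp : Continuous p)
    (hp₀ : ∀ x, 0 ≤ p x) (ht : ∀ x, m₁ x - deriv G x ≤ h x) :
    ∫ x in α..β, p x * ∫ y in x..β, m₁ y
      ≤ (∫ x in α..β, p x * ∫ y in x..β, h y) + G β * (∫ x in α..β, p x)
        - ∫ x in α..β, p x * G x := by
  have hG' := hG.continuous_deriv le_rfl
  have hH := continuous_integral_tail (β := β) hh
  have htail : ∀ x ≤ β, ∫ y in x..β, m₁ y ≤ (∫ y in x..β, h y) + G β - G x := fun x hx =>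
    calc ∫ y in x..β, m₁ y
        ≤ ∫ y in x..β, (h y + deriv G y) :=
          integral_mono_on hx (hm₁.intervalIntegrable _ _) ((hh.add hG').intervalIntegrable _ _)
            fun y _ => by linarith [ht y]
      _ = (∫ y in x..β, h y) + G β - G x := by
          rw [integral_add (hh.intervalIntegrable _ _) (hG'.intervalIntegrable _ _),
            integral_deriv_eq_sub (fun y _ => hG.differentiable one_ne_zero y)
              (hG'.intervalIntegrable _ _)]
          ring
  calc ∫ x in α..β, p x * ∫ y in x..β, m₁ y
      ≤ ∫ x in α..β, (p x * (∫ y in x..β, h y) + G β * p x - p x * G x) := by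
        refine integral_mono_on hαβ ((hp.mul (continuous_integral_tail hm₁)).intervalIntegrable _ _)
          ((((hp.mul hH).add (continuous_const.mul hp)).sub
            (hp.mul hG.continuous)).intervalIntegrable _ _)
          fun x hx => ?_
        have := mul_le_mul_of_nonneg_left (htail x hx.2) (hp₀ x)
        linarith
    _ = _ := by
        have i₁ : IntervalIntegrable (fun x => p x * ∫ y in x..β, h y) volume α β :=
          (hp.mul hH).intervalIntegrable _ _
        have i₂ : IntervalIntegrable (fun x => G β * p x) volume α β :=
          (continuous_const.mul hp).intervalIntegrable _ _
        have i₃ : IntervalIntegrable (fun x => p x * G x) volume α β :=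
          (hp.mul hG.continuous).intervalIntegrable _ _
        rw [integral_sub (i₁.add i₂) i₃, integral_add i₁ i₂, intervalIntegral.integral_const_mul]

theorem interaction_derivative_le {a₀ a₁ : ℝ} {a p m sp sm p₁ m₁ : ℝ → ℝ} (hαβ : α ≤ β)
    (hp : Continuous p) (hm : Continuous m) (hsp : Continuous sp) (hsm : Continuous sm)
    (hp₁ : Continuous p₁) (hm₁ : Continuous m₁)
    (hap : ContDiff ℝ 1 fun x => a x * p x) (ham : ContDiff ℝ 1 fun x => a x * m x)
    (ha₀ : ∀ x, a₀ ≤ a x) (ha₁ : ∀ x, a x ≤ a₁)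
    (hp₀ : ∀ x, 0 ≤ p x) (hm₀ : ∀ x, 0 ≤ m x) (hsp₀ : ∀ x, 0 ≤ sp x) (hsm₀ : ∀ x, 0 ≤ sm x)
    (htp : ∀ x, p₁ x + deriv (fun x => a x * p x) x ≤ sp x)
    (htm : ∀ x, m₁ x - deriv (fun x => a x * m x) x ≤ sm x) :
    (∫ x in α..β, (p₁ x * (∫ y in x..β, m y) + p x * ∫ y in x..β, m₁ y))
        - a₁ * m β * (∫ x in α..β, p x) - a₁ * p α * (∫ y in α..β, m y)
        + 2 * a₀ * ∫ x in α..β, p x * m x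
      ≤ (∫ x in α..β, sp x) * (∫ x in α..β, m x) + (∫ x in α..β, sm x) * ∫ x in α..β, p x := by
  have hP := integral_mul_tail_le_of_forward_transport hαβ hap hp₁ hsp hm hm₀ htp
  have hM := integral_mul_tail_le_of_backward_transport hαβ ham hm₁ hsm hp hp₀ htm
  have hTp := integral_mul_integral_tail_le hαβ hsp hm hsp₀ hm₀
  have hTm := integral_mul_integral_tail_le hαβ hp hsm hp₀ hsm₀
  have hsplit : ∫ x in α..β, (p₁ x * (∫ y in x..β, m y) + p x * ∫ y in x..β, m₁ y)
      = (∫ x in α..β, p₁ x * ∫ y in x..β, m y) + ∫ x in α..β, p x * ∫ y in x..β, m₁ y :=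
    integral_add ((hp₁.mul (continuous_integral_tail hm)).intervalIntegrable α β)
      ((hp.mul (continuous_integral_tail hm₁)).intervalIntegrable α β)
  have hdiag : 2 * a₀ * ∫ x in α..β, p x * m x
      ≤ (∫ x in α..β, a x * p x * m x) + ∫ x in α..β, p x * (a x * m x) := by
    have hpm : Continuous fun x => p x * m x := hp.mul hm
    have hapm : Continuous fun x => a x * p x * m x := hap.continuous.mul hm
    have hpam : Continuous fun x => p x * (a x * m x) := hp.mul ham.continuous
    rw [← integral_add (hapm.intervalIntegrable _ _) (hpam.intervalIntegrable _ _),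
      ← intervalIntegral.integral_const_mul]
    refine integral_mono_on hαβ ((continuous_const.mul hpm).intervalIntegrable _ _)
      ((hapm.add hpam).intervalIntegrable _ _) fun x _ => ?_
    nlinarith [ha₀ x, mul_nonneg (hp₀ x) (hm₀ x)]
  have hbdryp : (a α - a₁) * p α * (∫ y in α..β, m y) ≤ 0 :=
    mul_nonpos_of_nonpos_of_nonneg
      (mul_nonpos_of_nonpos_of_nonneg (by linarith [ha₁ α]) (hp₀ α))
      (integral_nonneg hαβ fun y _ => hm₀ y)
  have hbdrym : (a β - a₁) * m β * (∫ x in α..β, p x) ≤ 0 :=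
    mul_nonpos_of_nonpos_of_nonneg
      (mul_nonpos_of_nonpos_of_nonneg (by linarith [ha₁ β]) (hm₀ β))
      (integral_nonneg hαβ fun x _ => hp₀ x)
  linarith

end Slice

theorem higher_integrability_general
    (R₀ Rs a₀ a₁ L : ℝ) (ha₀ : 0 < a₀) (ha₀₁ : a₀ ≤ a₁)
    (hL : a₁ * Rs < L)
    (a wp wm hp hm : ℝ → ℝ → ℝ)
    (ha_smooth : ContDiff ℝ (⊤ : ℕ∞) (Function.uncurry a))
    (hwp_smooth : ContDiff ℝ (⊤ : ℕ∞) (Function.uncurry wp))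
    (hwm_smooth : ContDiff ℝ (⊤ : ℕ∞) (Function.uncurry wm))
    (hhp_smooth : ContDiff ℝ (⊤ : ℕ∞) (Function.uncurry hp))
    (hhm_smooth : ContDiff ℝ (⊤ : ℕ∞) (Function.uncurry hm))
    (hab : ∀ r ∈ Set.Icc R₀ Rs, ∀ θ : ℝ, a₀ ≤ a r θ ∧ a r θ ≤ a₁)
    (hwp_nn : ∀ r ∈ Set.Icc R₀ Rs, ∀ θ : ℝ, 0 ≤ wp r θ)
    (hwm_nn : ∀ r ∈ Set.Icc R₀ Rs, ∀ θ : ℝ, 0 ≤ wm r θ)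
    (hhp_nn : ∀ r ∈ Set.Icc R₀ Rs, ∀ θ : ℝ, 0 ≤ hp r θ)
    (hhm_nn : ∀ r ∈ Set.Icc R₀ Rs, ∀ θ : ℝ, 0 ≤ hm r θ)
    (htp : ∀ r ∈ Set.Icc R₀ Rs, ∀ θ : ℝ,
      pd1 wp r θ + pd2 (fun r' θ' => a r' θ' * wp r' θ') r θ ≤ hp r θ)
    (htm : ∀ r ∈ Set.Icc R₀ Rs, ∀ θ : ℝ,
      pd1 wm r θ - pd2 (fun r' θ' => a r' θ' * wm r' θ') r θ ≤ hm r θ) :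
    ∀ R ∈ Set.Ioo R₀ Rs,
      deriv (fun r => ∫ θp in (-L + a₁ * r)..(L - a₁ * r),
          ∫ θm in θp..(L - a₁ * r), wp r θp * wm r θm) R
        + 2 * a₀ * (∫ θ in (-L + a₁ * R)..(L - a₁ * R), wp R θ * wm R θ)
      ≤ (∫ θ in (-L + a₁ * R)..(L - a₁ * R), hp R θ)
          * (∫ θ in (-L + a₁ * R)..(L - a₁ * R), wm R θ)
        + (∫ θ in (-L + a₁ * R)..(L - a₁ * R), hm R θ)
          * (∫ θ in (-L + a₁ * R)..(L - a₁ * R), wp R θ) := by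
  intro R hR
  have hR' : R ∈ Set.Icc R₀ Rs := Set.Ioo_subset_Icc_self hR
  have hαβ : -L + a₁ * R ≤ L - a₁ * R := by
    have := mul_le_mul_of_nonneg_left hR.2.le (ha₀.le.trans ha₀₁)
    linarith
  have C1 : ∀ {f : ℝ → ℝ → ℝ}, ContDiff ℝ (⊤ : ℕ∞) (uncurry f) → ContDiff ℝ 1 (uncurry f) :=
    fun hf => hf.of_le (by exact_mod_cast le_top)
  have slice : ∀ {f : ℝ → ℝ → ℝ}, ContDiff ℝ (⊤ : ℕ∞) (uncurry f) → ContDiff ℝ 1 (f R) :=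
    fun hf => (C1 hf).comp (contDiff_const.prodMk contDiff_id)
  have hN := hasDerivAt_integral_triangle (α := fun r => -L + a₁ * r) (β' := fun _ => -a₁)
    hwp_smooth.continuous hwm_smooth.continuous (continuous_pd1 (C1 hwp_smooth))
    (continuous_pd1 (C1 hwm_smooth)) (hasDerivAt_pd1 (C1 hwp_smooth))
    (hasDerivAt_pd1 (C1 hwm_smooth))
    (fun r => by simpa only [id_eq, mul_one] using ((hasDerivAt_id r).const_mul a₁).const_sub L)
    continuous_const
    (by simpa only [id_eq, mul_one] using ((hasDerivAt_id R).const_mul a₁).const_add (-L))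
  have hslice := interaction_derivative_le hαβ (hwp_smooth.continuous.uncurry_left R)
    (hwm_smooth.continuous.uncurry_left R) (hhp_smooth.continuous.uncurry_left R)
    (hhm_smooth.continuous.uncurry_left R) ((continuous_pd1 (C1 hwp_smooth)).uncurry_left R)
    ((continuous_pd1 (C1 hwm_smooth)).uncurry_left R) ((slice ha_smooth).mul (slice hwp_smooth))
    ((slice ha_smooth).mul (slice hwm_smooth)) (fun x => (hab R hR' x).1)
    (fun x => (hab R hR' x).2) (hwp_nn R hR') (hwm_nn R hR') (hhp_nn R hR') (hhm_nn R hR')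
    (htp R hR') (htm R hR')
  rw [hN.deriv]
  linarith

/-- **Spacetime higher-integrability estimate.**
Let `0 < a₀ ≤ a ≤ a₁` on `[R₀,R*] × ℝ`, and let `w₊, w₋ ≥ 0` satisfy the transport
inequalities `∂_R w₊ + ∂_θ(a w₊) ≤ h₊` and `∂_R w₋ − ∂_θ(a w₋) ≤ h₋` with `h₊, h₋ ≥ 0`.
Then for `L > a₁ R*` and every `R ∈ (R₀,R*)`,
`(d/dR) N^I(R) + 2 a₀ N^II(R) ≤ N^III(R)`. -/
theorem higher_integrability
    (R₀ Rs a₀ a₁ L : ℝ) (hR : R₀ < Rs) (ha₀ : 0 < a₀) (ha₀₁ : a₀ ≤ a₁)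
    (hL : a₁ * Rs < L)
    (a wp wm hp hm : ℝ → ℝ → ℝ)
    (ha_smooth : ContDiff ℝ (⊤ : ℕ∞) (Function.uncurry a))
    (hwp_smooth : ContDiff ℝ (⊤ : ℕ∞) (Function.uncurry wp))
    (hwm_smooth : ContDiff ℝ (⊤ : ℕ∞) (Function.uncurry wm))
    (hhp_smooth : ContDiff ℝ (⊤ : ℕ∞) (Function.uncurry hp))
    (hhm_smooth : ContDiff ℝ (⊤ : ℕ∞) (Function.uncurry hm))
    (hab : ∀ r ∈ Set.Icc R₀ Rs, ∀ θ : ℝ, a₀ ≤ a r θ ∧ a r θ ≤ a₁)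
    (hwp_nn : ∀ r ∈ Set.Icc R₀ Rs, ∀ θ : ℝ, 0 ≤ wp r θ)
    (hwm_nn : ∀ r ∈ Set.Icc R₀ Rs, ∀ θ : ℝ, 0 ≤ wm r θ)
    (hhp_nn : ∀ r ∈ Set.Icc R₀ Rs, ∀ θ : ℝ, 0 ≤ hp r θ)
    (hhm_nn : ∀ r ∈ Set.Icc R₀ Rs, ∀ θ : ℝ, 0 ≤ hm r θ)
    (htp : ∀ r ∈ Set.Icc R₀ Rs, ∀ θ : ℝ,
      pd1 wp r θ + pd2 (fun r' θ' => a r' θ' * wp r' θ') r θ ≤ hp r θ)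
    (htm : ∀ r ∈ Set.Icc R₀ Rs, ∀ θ : ℝ,
      pd1 wm r θ - pd2 (fun r' θ' => a r' θ' * wm r' θ') r θ ≤ hm r θ) :
    ∀ R ∈ Set.Ioo R₀ Rs,
      deriv (fun r => ∫ θp in (-L + a₁ * r)..(L - a₁ * r),
          ∫ θm in θp..(L - a₁ * r), wp r θp * wm r θm) R
        + 2 * a₀ * (∫ θ in (-L + a₁ * R)..(L - a₁ * R), wp R θ * wm R θ)
      ≤ (∫ θ in (-L + a₁ * R)..(L - a₁ * R), hp R θ)
          * (∫ θ in (-L + a₁ * R)..(L - a₁ * R), wm R θ)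
        + (∫ θ in (-L + a₁ * R)..(L - a₁ * R), hm R θ)
          * (∫ θ in (-L + a₁ * R)..(L - a₁ * R), wp R θ) :=
  higher_integrability_general R₀ Rs a₀ a₁ L ha₀ ha₀₁ hL a wp wm hp hm ha_smooth hwp_smooth
    hwm_smooth hhp_smooth hhm_smooth hab hwp_nn hwm_nn hhp_nn hhm_nn htp htm
end

section
/- Let H, N : ℝ → ℝ be continuous and 2π-periodic with N(θ) ≤ 0 for all θ, and let λ : ℝ → ℝ be continuously differentiable and 2π-periodic with λ'(θ) = H(θ) λ(θ) + N(θ) for all θ. Then either λ(θ) ≠ 0 for all θ ∈ ℝ, or else λ ≡ 0 and N ≡ 0. -/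
open Real

theorem hasDerivAt_exp_neg_integral_mul {H N f : ℝ → ℝ} (hH : Continuous H)
    (hf : ∀ x, HasDerivAt f (H x * f x + N x) x) (x : ℝ) :
    HasDerivAt (fun y => exp (-∫ t in (0 : ℝ)..y, H t) * f y)
      (exp (-∫ t in (0 : ℝ)..x, H t) * N x) x := by
  have hprimitive : HasDerivAt (fun y => ∫ t in (0 : ℝ)..y, H t) (H x) x :=
    intervalIntegral.integral_hasDerivAt_right (hH.intervalIntegrable _ _)
      (hH.stronglyMeasurableAtFilter _ _) hH.continuousAt
  have hfactor : HasDerivAt (fun y => exp (-∫ t in (0 : ℝ)..y, H t))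
      (exp (-∫ t in (0 : ℝ)..x, H t) * -H x) x :=
    hprimitive.neg.exp
  exact (hfactor.mul (hf x)).congr_deriv (by ring)

theorem antitone_exp_neg_integral_mul {H N f : ℝ → ℝ} (hH : Continuous H)
    (hf : ∀ x, HasDerivAt f (H x * f x + N x) x) (hN : ∀ x, N x ≤ 0) :
    Antitone (fun y => exp (-∫ t in (0 : ℝ)..y, H t) * f y) :=
  antitone_of_hasDerivAt_nonpos (hasDerivAt_exp_neg_integral_mul hH hf)
    fun x => mul_nonpos_of_nonneg_of_nonpos (exp_nonneg _) (hN x)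

/-- Over one period `w * f` drops from `w a * f a = 0` to `w (a + T) * f a = 0`, so it
vanishes in between. -/
theorem Function.Periodic.eq_zero_of_antitone_mul {f w : ℝ → ℝ} {T a : ℝ}
    (hf : Function.Periodic f T) (hT : 0 < T) (hw : ∀ x, w x ≠ 0)
    (hanti : Antitone fun x => w x * f x) (ha : f a = 0) (x : ℝ) : f x = 0 := by
  obtain ⟨y, ⟨hay, hyT⟩, hxy⟩ := hf.exists_mem_Ico hT x a
  have hstart : w a * f a = 0 := by rw [ha, mul_zero]
  have hend : w (a + T) * f (a + T) = 0 := by rw [hf a, ha, mul_zero]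
  have hwy : w y * f y = 0 :=
    le_antisymm (hstart ▸ hanti hay) (hend ▸ hanti hyT.le)
  rw [hxy]
  exact (mul_eq_zero.mp hwy).resolve_left (hw y)

theorem periodic_ode_dichotomy_general
    (H N lam : ℝ → ℝ)
    (hH : Continuous H)
    (hNnonpos : ∀ θ : ℝ, N θ ≤ 0)
    (hlam : ContDiff ℝ 1 lam)
    (hlamper : ∀ θ : ℝ, lam (θ + 2 * Real.pi) = lam θ)
    (hode : ∀ θ : ℝ, deriv lam θ = H θ * lam θ + N θ) :
    (∀ θ : ℝ, lam θ ≠ 0) ∨ ((∀ θ : ℝ, lam θ = 0) ∧ (∀ θ : ℝ, N θ = 0)) := by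
  refine or_iff_not_imp_left.mpr fun hvanish => ?_
  obtain ⟨θ₀, hθ₀⟩ := not_forall_not.mp hvanish
  have hderiv : ∀ θ, HasDerivAt lam (H θ * lam θ + N θ) θ := fun θ =>
    hode θ ▸ ((hlam.differentiable one_ne_zero) θ).hasDerivAt
  have hzero : ∀ θ, lam θ = 0 :=
    Function.Periodic.eq_zero_of_antitone_mul hlamper two_pi_pos (fun _ => exp_ne_zero _)
      (antitone_exp_neg_integral_mul hH hderiv hNnonpos) hθ₀
  refine ⟨hzero, fun θ => ?_⟩
  have hconst : HasDerivAt lam 0 θ := by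
    simpa only [show lam = fun _ => 0 from funext hzero] using hasDerivAt_const θ (0 : ℝ)
  simpa only [hzero θ, mul_zero, zero_add] using (hderiv θ).unique hconst

/-- **ODE dichotomy for periodic linear equations with sign-definite source.**
If `H, N : ℝ → ℝ` are continuous and `2π`-periodic with `N ≤ 0`, and `λ` is a
`C¹` `2π`-periodic solution of `λ' = H λ + N`, then either `λ` never vanishes,
or `λ ≡ 0` and `N ≡ 0`. -/
theorem periodic_ode_dichotomy
    (H N lam : ℝ → ℝ)
    (hH : Continuous H) (hN : Continuous N)
    (hHper : ∀ θ : ℝ, H (θ + 2 * Real.pi) = H θ)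
    (hNper : ∀ θ : ℝ, N (θ + 2 * Real.pi) = N θ)
    (hNnonpos : ∀ θ : ℝ, N θ ≤ 0)
    (hlam : ContDiff ℝ 1 lam)
    (hlamper : ∀ θ : ℝ, lam (θ + 2 * Real.pi) = lam θ)
    (hode : ∀ θ : ℝ, deriv lam θ = H θ * lam θ + N θ) :
    (∀ θ : ℝ, lam θ ≠ 0) ∨ ((∀ θ : ℝ, lam θ = 0) ∧ (∀ θ : ℝ, N θ = 0)) :=
  periodic_ode_dichotomy_general H N lam hH hNnonpos hlam hlamper hode
end

section
/- Let R : [τ₀,τ₁) × ℝ → ℝ be smooth, 2π-periodic in the second variable ξ, with R_ττ − R_ξξ ≥ 0 everywhere, and suppose R_u(τ₀,ξ) > 0 and R_v(τ₀,ξ) > 0 for all ξ, where R_u := R_τ − R_ξ and R_v := R_τ + R_ξ. Then for all τ ∈ [τ₀,τ₁) and all ξ: (i) R_u(τ,ξ) ≥ inf_{ξ'} R_u(τ₀,ξ') and R_v(τ,ξ) ≥ inf_{ξ'} R_v(τ₀,ξ'); (ii) R_τ(τ,ξ) ≥ (1/2)(inf_{ξ'} R_u(τ₀,ξ') + inf_{ξ'}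 R_v(τ₀,ξ')) > 0, so R is strictly increasing in τ; (iii) R(τ,ξ) ≥ inf_{ξ'} R(τ₀,ξ'); (iv) (R_τ² − R_ξ²)(τ,ξ) ≥ (inf_{ξ'} R_u(τ₀,ξ'))·(inf_{ξ'} R_v(τ₀,ξ')). -/
/-!
Because mixed partials commute, `R_ττ - R_ξξ = ∂_v R_u = ∂_u R_v`, so the wave inequality makes
`R_u` nondecreasing along the characteristics `ξ - τ = const` and `R_v` along `ξ + τ = const`.
Following the characteristic through `(τ, ξ)` back to `τ₀` bounds `R_u` and `R_v` below by their
initial infima, which are attained, hence positive, since the initial data are continuous and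
periodic. The bounds on `R_τ = (R_u + R_v) / 2` and on `R_τ² - R_ξ² = R_u R_v` follow, and `R_τ > 0`
makes `R` increasing in `τ`.
-/

open Function Set

theorem Function.Periodic.isLeast_iInf {g : ℝ → ℝ} {c : ℝ} (hp : Periodic g c) (hc : c ≠ 0)
    (hg : Continuous g) : IsLeast (range g) (⨅ x, g x) :=
  (hp.compact_of_continuous hc hg).isLeast_sInf (range_nonempty g)

section LineDerivative

variable {E F : Type*} [NormedAddCommGroup E] [NormedSpace ℝ E]
  [NormedAddCommGroup F] [NormedSpace ℝ F]

theorem HasFDerivAt.hasDerivAt_add_smul {f : E → F} {f' : E →L[ℝ] F} {p w : E} {s : ℝ}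
    (hf : HasFDerivAt f f' (p + s • w)) : HasDerivAt (fun t : ℝ => f (p + t • w)) (f' w) s := by
  have hline : HasDerivAt (fun t : ℝ => p + t • w) w s := by
    simpa using ((hasDerivAt_id s).smul_const w).const_add p
  exact hf.comp_hasDerivAt s hline

theorem fderiv_clm_apply_const_apply {G : E → E →L[ℝ] F} {p : E} (hG : DifferentiableAt ℝ G p)
    (v w : E) :
    fderiv ℝ (fun q => G q v) p w = fderiv ℝ G p w v := by
  have h : HasFDerivAt (fun q => G q v)
      ((ContinuousLinearMap.apply ℝ F v).comp (fderiv ℝ G p)) p :=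
    (ContinuousLinearMap.apply ℝ F v).hasFDerivAt.comp p hG.hasFDerivAt
  rw [h.fderiv]
  rfl

theorem monotoneOn_comp_add_smul {g : E → ℝ} (hg : Differentiable ℝ g) {I : Set ℝ}
    (hI : Convex ℝ I) {p w : E} (hnn : ∀ s ∈ interior I, 0 ≤ fderiv ℝ g (p + s • w) w) :
    MonotoneOn (fun s => g (p + s • w)) I := by
  have hderiv (s : ℝ) : HasDerivAt (fun t => g (p + t • w)) (fderiv ℝ g (p + s • w) w) s :=
    (hg _).hasFDerivAt.hasDerivAt_add_smul
  refine monotoneOn_of_deriv_nonneg hI ?_ ?_ fun s hs => (hderiv s).deriv ▸ hnn s hs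
  · exact continuousOn_of_forall_continuousAt fun s _ => (hderiv s).continuousAt
  · exact fun s _ => (hderiv s).differentiableAt.differentiableWithinAt

end LineDerivative

theorem IsSymmSndFDerivAt.fderiv_fderiv_null_eq {g : ℝ × ℝ → ℝ} {p : ℝ × ℝ}
    (hg : IsSymmSndFDerivAt ℝ g p) {σ : ℝ} (hσ : σ ^ 2 = 1) :
    fderiv ℝ (fderiv ℝ g) p (1, -σ) (1, σ) =
      fderiv ℝ (fderiv ℝ g) p (1, 0) (1, 0) - fderiv ℝ (fderiv ℝ g) p (0, 1) (0, 1) := by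
  have hminus : ((1 : ℝ), -σ) = (1, 0) - σ • (0, 1) := by simp
  have hplus : ((1 : ℝ), σ) = (1, 0) + σ • (0, 1) := by simp
  rw [hminus, hplus]
  simp only [map_add, map_sub, map_smul, sub_apply, smul_apply, smul_eq_mul, hg (0, 1) (1, 0)]
  linear_combination (-fderiv ℝ (fderiv ℝ g) p (0, 1) (0, 1)) * hσ

section AreaFunction

variable {R : ℝ → ℝ → ℝ}

theorem pd1_eq_fderiv_s3 (hR : Differentiable ℝ (uncurry R)) (x y : ℝ) :
    pd1 R x y = fderiv ℝ (uncurry R) (x, y) (1, 0) := by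
  have h : HasDerivAt (fun t => R t y) (fderiv ℝ (uncurry R) (x, y) (1, 0)) x := by
    simpa using (hR ((0, y) + x • (1, 0))).hasFDerivAt.hasDerivAt_add_smul
  exact h.deriv

theorem pd2_eq_fderiv (hR : Differentiable ℝ (uncurry R)) (x y : ℝ) :
    pd2 R x y = fderiv ℝ (uncurry R) (x, y) (0, 1) := by
  have h : HasDerivAt (fun t => R x t) (fderiv ℝ (uncurry R) (x, y) (0, 1)) y := by
    simpa using (hR ((x, 0) + y • (0, 1))).hasFDerivAt.hasDerivAt_add_smul
  exact h.deriv

theorem pd1_pd1_eq (hR : ContDiff ℝ 2 (uncurry R)) (x y : ℝ) :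
    pd1 (pd1 R) x y = fderiv ℝ (fderiv ℝ (uncurry R)) (x, y) (1, 0) (1, 0) := by
  have hD := (hR.fderiv_right le_rfl).differentiable one_ne_zero
  have h : uncurry (pd1 R) = fun q => fderiv ℝ (uncurry R) q (1, 0) :=
    funext fun q => pd1_eq_fderiv_s3 (hR.differentiable two_ne_zero) q.1 q.2
  have hd : Differentiable ℝ (uncurry (pd1 R)) := h ▸ hD.clm_apply (differentiable_const _)
  rw [pd1_eq_fderiv_s3 hd, h, fderiv_clm_apply_const_apply (hD _)]

theorem pd2_pd2_eq (hR : ContDiff ℝ 2 (uncurry R)) (x y : ℝ) :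
    pd2 (pd2 R) x y = fderiv ℝ (fderiv ℝ (uncurry R)) (x, y) (0, 1) (0, 1) := by
  have hD := (hR.fderiv_right le_rfl).differentiable one_ne_zero
  have h : uncurry (pd2 R) = fun q => fderiv ℝ (uncurry R) q (0, 1) :=
    funext fun q => pd2_eq_fderiv (hR.differentiable two_ne_zero) q.1 q.2
  have hd : Differentiable ℝ (uncurry (pd2 R)) := h ▸ hD.clm_apply (differentiable_const _)
  rw [pd2_eq_fderiv hd, h, fderiv_clm_apply_const_apply (hD _)]

theorem continuous_pd1_s3 (hR : ContDiff ℝ 1 (uncurry R)) (τ : ℝ) : Continuous (pd1 R τ) := by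
  have h : pd1 R τ = fun ξ => fderiv ℝ (uncurry R) (τ, ξ) (1, 0) :=
    funext (pd1_eq_fderiv_s3 (hR.differentiable one_ne_zero) τ)
  rw [h]
  exact ((hR.continuous_fderiv one_ne_zero).clm_apply continuous_const).comp
    (Continuous.prodMk_right τ)

theorem continuous_pd2 (hR : ContDiff ℝ 1 (uncurry R)) (τ : ℝ) : Continuous (pd2 R τ) := by
  have h : pd2 R τ = fun ξ => fderiv ℝ (uncurry R) (τ, ξ) (0, 1) :=
    funext (pd2_eq_fderiv (hR.differentiable one_ne_zero) τ)
  rw [h]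
  exact ((hR.continuous_fderiv one_ne_zero).clm_apply continuous_const).comp
    (Continuous.prodMk_right τ)

theorem periodic_pd1 {c : ℝ} (hR : ∀ τ ξ, R τ (ξ + c) = R τ ξ) (τ : ℝ) :
    Periodic (pd1 R τ) c := fun ξ => by
  simp only [pd1, hR]

theorem periodic_pd2 {c : ℝ} (hR : ∀ τ ξ, R τ (ξ + c) = R τ ξ) (τ : ℝ) :
    Periodic (pd2 R τ) c := fun ξ => by
  rw [pd2, pd2, ← deriv_comp_add_const]
  simp only [hR]

-- `σ = -1` is the statement for `R_u`, `σ = 1` the one for `R_v`.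
theorem pd1_add_mul_pd2_le_of_wave (hR : ContDiff ℝ 2 (uncurry R)) {τ₀ τ₁ : ℝ}
    (hwave : ∀ τ ∈ Ico τ₀ τ₁, ∀ ξ, 0 ≤ pd1 (pd1 R) τ ξ - pd2 (pd2 R) τ ξ)
    {σ : ℝ} (hσ : σ ^ 2 = 1) {τ : ℝ} (hτ : τ ∈ Ico τ₀ τ₁) (ξ : ℝ) :
    pd1 R τ₀ (ξ + σ * (τ - τ₀)) + σ * pd2 R τ₀ (ξ + σ * (τ - τ₀)) ≤
      pd1 R τ ξ + σ * pd2 R τ ξ := by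
  set D := fderiv ℝ (uncurry R)
  have hD : Differentiable ℝ D := (hR.fderiv_right le_rfl).differentiable one_ne_zero
  have hnull (x y : ℝ) : pd1 R x y + σ * pd2 R x y = D (x, y) (1, σ) := by
    have hplus : ((1 : ℝ), σ) = (1, 0) + σ • (0, 1) := by simp
    rw [pd1_eq_fderiv_s3 (hR.differentiable two_ne_zero),
      pd2_eq_fderiv (hR.differentiable two_ne_zero), hplus, map_add, map_smul, smul_eq_mul]
  -- the characteristic through `(τ, ξ)` along which `R_τ + σ R_ξ` is nondecreasing
  set p : ℝ × ℝ := (0, ξ + σ * τ)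
  set w : ℝ × ℝ := (1, -σ)
  have hline (s : ℝ) : p + s • w = (s, ξ + σ * τ - σ * s) := by
    refine Prod.ext (by simp [p, w]) ?_
    simp only [p, w, Prod.snd_add, Prod.smul_snd, smul_eq_mul]
    ring
  have hmono : MonotoneOn (fun s => D (p + s • w) (1, σ)) (Ico τ₀ τ₁) := by
    refine monotoneOn_comp_add_smul (hD.clm_apply (differentiable_const _)) (convex_Ico _ _)
      fun s hs => ?_
    have hsymm : IsSymmSndFDerivAt ℝ (uncurry R) (p + s • w) :=
      hR.contDiffAt.isSymmSndFDerivAt (by simp)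
    rw [fderiv_clm_apply_const_apply (hD _), hsymm.fderiv_fderiv_null_eq hσ, hline,
      ← pd1_pd1_eq hR, ← pd2_pd2_eq hR]
    exact hwave s (interior_subset hs) _
  have hstart : ξ + σ * τ - σ * τ₀ = ξ + σ * (τ - τ₀) := by ring
  have hend : ξ + σ * τ - σ * τ = ξ := by ring
  simpa only [hline, hstart, hend, ← hnull] using hmono ⟨le_rfl, hτ.1.trans_lt hτ.2⟩ hτ hτ.1

end AreaFunction

theorem area_function_monotonicity_general
    (τ₀ τ₁ : ℝ) (R : ℝ → ℝ → ℝ)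
    (hsmooth : ContDiff ℝ (⊤ : ℕ∞) (Function.uncurry R))
    (hper : ∀ τ ξ : ℝ, R τ (ξ + 2 * Real.pi) = R τ ξ)
    (hwave : ∀ τ ∈ Set.Ico τ₀ τ₁, ∀ ξ : ℝ, 0 ≤ pd1 (pd1 R) τ ξ - pd2 (pd2 R) τ ξ)
    (hu : ∀ ξ : ℝ, 0 < pd1 R τ₀ ξ - pd2 R τ₀ ξ)
    (hv : ∀ ξ : ℝ, 0 < pd1 R τ₀ ξ + pd2 R τ₀ ξ) :
    ∀ τ ∈ Set.Ico τ₀ τ₁, ∀ ξ : ℝ,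
      ((⨅ ξ' : ℝ, (pd1 R τ₀ ξ' - pd2 R τ₀ ξ')) ≤ pd1 R τ ξ - pd2 R τ ξ ∧
        (⨅ ξ' : ℝ, (pd1 R τ₀ ξ' + pd2 R τ₀ ξ')) ≤ pd1 R τ ξ + pd2 R τ ξ) ∧
      ((1 / 2) * ((⨅ ξ' : ℝ, (pd1 R τ₀ ξ' - pd2 R τ₀ ξ'))
            + (⨅ ξ' : ℝ, (pd1 R τ₀ ξ' + pd2 R τ₀ ξ'))) ≤ pd1 R τ ξ ∧
        0 < (1 / 2) * ((⨅ ξ' : ℝ, (pd1 R τ₀ ξ' - pd2 R τ₀ ξ'))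
            + (⨅ ξ' : ℝ, (pd1 R τ₀ ξ' + pd2 R τ₀ ξ'))) ∧
        StrictMonoOn (fun s => R s ξ) (Set.Ico τ₀ τ₁)) ∧
      ((⨅ ξ' : ℝ, R τ₀ ξ') ≤ R τ ξ) ∧
      ((⨅ ξ' : ℝ, (pd1 R τ₀ ξ' - pd2 R τ₀ ξ'))
          * (⨅ ξ' : ℝ, (pd1 R τ₀ ξ' + pd2 R τ₀ ξ'))
        ≤ (pd1 R τ ξ) ^ 2 - (pd2 R τ ξ) ^ 2) := by
  intro τ hτ ξ
  have hR : ContDiff ℝ 2 (uncurry R) := hsmooth.of_le (WithTop.coe_le_coe.mpr le_top)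
  have hR1 : ContDiff ℝ 1 (uncurry R) := hR.of_le one_le_two
  obtain ⟨⟨ξu, hξu⟩, hu_le⟩ := ((periodic_pd1 hper τ₀).sub (periodic_pd2 hper τ₀)).isLeast_iInf
    Real.two_pi_pos.ne' ((continuous_pd1_s3 hR1 τ₀).sub (continuous_pd2 hR1 τ₀))
  obtain ⟨⟨ξv, hξv⟩, hv_le⟩ := ((periodic_pd1 hper τ₀).add (periodic_pd2 hper τ₀)).isLeast_iInf
    Real.two_pi_pos.ne' ((continuous_pd1_s3 hR1 τ₀).add (continuous_pd2 hR1 τ₀))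
  obtain ⟨-, hR_le⟩ := Periodic.isLeast_iInf (hper τ₀) Real.two_pi_pos.ne'
    (hR.continuous.comp (Continuous.prodMk_right τ₀))
  set a := ⨅ ξ' : ℝ, (pd1 R τ₀ ξ' - pd2 R τ₀ ξ')
  set b := ⨅ ξ' : ℝ, (pd1 R τ₀ ξ' + pd2 R τ₀ ξ')
  have ha : 0 < a := (hu ξu).trans_eq hξu
  have hb : 0 < b := (hv ξv).trans_eq hξv
  have hRu (s : ℝ) (hs : s ∈ Ico τ₀ τ₁) : a ≤ pd1 R s ξ - pd2 R s ξ :=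
    (hu_le (mem_range_self _)).trans <| by
      simpa [← sub_eq_add_neg] using
        pd1_add_mul_pd2_le_of_wave hR hwave (σ := -1) (by norm_num) hs ξ
  have hRv (s : ℝ) (hs : s ∈ Ico τ₀ τ₁) : b ≤ pd1 R s ξ + pd2 R s ξ :=
    (hv_le (mem_range_self _)).trans <| by
      simpa using pd1_add_mul_pd2_le_of_wave hR hwave (σ := 1) (by norm_num) hs ξ
  have hRτ (s : ℝ) (hs : s ∈ Ico τ₀ τ₁) : 1 / 2 * (a + b) ≤ pd1 R s ξ := by
    linarith [hRu s hs, hRv s hs]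
  have hmono : StrictMonoOn (fun s => R s ξ) (Ico τ₀ τ₁) :=
    strictMonoOn_of_deriv_pos (convex_Ico _ _)
      (hR.continuous.comp (Continuous.prodMk_left ξ)).continuousOn
      fun s hs => lt_of_lt_of_le (by positivity) (hRτ s (interior_subset hs))
  refine ⟨⟨hRu τ hτ, hRv τ hτ⟩, ⟨hRτ τ hτ, by positivity, hmono⟩,
    (hR_le (mem_range_self ξ)).trans (hmono.monotoneOn ⟨le_rfl, hτ.1.trans_lt hτ.2⟩ hτ hτ.1), ?_⟩
  calc a * b ≤ (pd1 R τ ξ - pd2 R τ ξ) * (pd1 R τ ξ + pd2 R τ ξ) :=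
        mul_le_mul (hRu τ hτ) (hRv τ hτ) hb.le (ha.le.trans (hRu τ hτ))
    _ = pd1 R τ ξ ^ 2 - pd2 R τ ξ ^ 2 := by ring

/-- **Monotonicity of the area function in conformal coordinates.**
If `R` is smooth, `2π`-periodic in `ξ`, satisfies `R_ττ − R_ξξ ≥ 0` on the strip,
and `R_u(τ₀,·) > 0`, `R_v(τ₀,·) > 0` (with `R_u = R_τ − R_ξ`, `R_v = R_τ + R_ξ`),
then: (i) `R_u, R_v` are bounded below by their initial infima; (ii) `R_τ` is bounded
below by the positive quantity `(1/2)(inf R_u(τ₀,·) + inf R_v(τ₀,·))` and `R` is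
strictly increasing in `τ`; (iii) `R ≥ inf R(τ₀,·)`; (iv) `R_τ² − R_ξ² ≥
inf R_u(τ₀,·) · inf R_v(τ₀,·)`. -/
theorem area_function_monotonicity
    (τ₀ τ₁ : ℝ) (hτ : τ₀ < τ₁) (R : ℝ → ℝ → ℝ)
    (hsmooth : ContDiff ℝ (⊤ : ℕ∞) (Function.uncurry R))
    (hper : ∀ τ ξ : ℝ, R τ (ξ + 2 * Real.pi) = R τ ξ)
    (hwave : ∀ τ ∈ Set.Ico τ₀ τ₁, ∀ ξ : ℝ, 0 ≤ pd1 (pd1 R) τ ξ - pd2 (pd2 R) τ ξ)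
    (hu : ∀ ξ : ℝ, 0 < pd1 R τ₀ ξ - pd2 R τ₀ ξ)
    (hv : ∀ ξ : ℝ, 0 < pd1 R τ₀ ξ + pd2 R τ₀ ξ) :
    ∀ τ ∈ Set.Ico τ₀ τ₁, ∀ ξ : ℝ,
      ((⨅ ξ' : ℝ, (pd1 R τ₀ ξ' - pd2 R τ₀ ξ')) ≤ pd1 R τ ξ - pd2 R τ ξ ∧
        (⨅ ξ' : ℝ, (pd1 R τ₀ ξ' + pd2 R τ₀ ξ')) ≤ pd1 R τ ξ + pd2 R τ ξ) ∧
      ((1 / 2) * ((⨅ ξ' : ℝ, (pd1 R τ₀ ξ' - pd2 R τ₀ ξ'))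
            + (⨅ ξ' : ℝ, (pd1 R τ₀ ξ' + pd2 R τ₀ ξ'))) ≤ pd1 R τ ξ ∧
        0 < (1 / 2) * ((⨅ ξ' : ℝ, (pd1 R τ₀ ξ' - pd2 R τ₀ ξ'))
            + (⨅ ξ' : ℝ, (pd1 R τ₀ ξ' + pd2 R τ₀ ξ'))) ∧
        StrictMonoOn (fun s => R s ξ) (Set.Ico τ₀ τ₁)) ∧
      ((⨅ ξ' : ℝ, R τ₀ ξ') ≤ R τ ξ) ∧
      ((⨅ ξ' : ℝ, (pd1 R τ₀ ξ' - pd2 R τ₀ ξ'))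
          * (⨅ ξ' : ℝ, (pd1 R τ₀ ξ' + pd2 R τ₀ ξ'))
        ≤ (pd1 R τ ξ) ^ 2 - (pd2 R τ ξ) ^ 2) :=
  area_function_monotonicity_general τ₀ τ₁ R hsmooth hper hwave hu hv
end
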